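/- Let Comma F G be abelian as in the main theorem. If 0 → (A',B',α') →(f,g) (A,B,α) →(h,k) (A'',B'',α'') → 0 is a short exact sequence in Comma F G, then 0 → A' → A → A'' → 0 is a short exact sequence in A and 0 → B' → B → B'' → 0 is a short exact sequence in B. -/

import Mathlib

open CategoryTheory CategoryTheory.Limits

/-!
Limits and colimits in `Comma L R` are computed componentwise as soon as `R` preserves the
limits (resp. `L` the colimits) in question, so both projections are exact functors when `F` is
right exact and `G` left exact. Exact functors preserve short exact sequences.
-/

namespace CategoryTheory.Comma

universe w' w v₁ v₂ v₃ u₁ u₂ u₃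

variable {A : Type u₁} [Category.{v₁} A] {B : Type u₂} [Category.{v₂} B]
  {T : Type u₃} [Category.{v₃} T] (L : A ⥤ T) (R : B ⥤ T)

section Limits

variable {J : Type w} [Category.{w'} J] [HasLimitsOfShape J A] [HasLimitsOfShape J B]
  [PreservesLimitsOfShape J R]

instance preservesLimitsOfShape_fst : PreservesLimitsOfShape J (fst L R) where
  preservesLimit {K} :=
    let t₁ := limit.isLimit (K ⋙ fst L R)
    preservesLimit_of_preserves_limit_cone
      (coneOfPreservesIsLimit K t₁ (limit.isLimit (K ⋙ snd L R)))
      (t₁.ofIsoLimit (Cone.ext (Iso.refl _) fun _ => (Category.id_comp _).symm))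

instance preservesLimitsOfShape_snd : PreservesLimitsOfShape J (snd L R) where
  preservesLimit {K} :=
    let t₂ := limit.isLimit (K ⋙ snd L R)
    preservesLimit_of_preserves_limit_cone
      (coneOfPreservesIsLimit K (limit.isLimit (K ⋙ fst L R)) t₂)
      (t₂.ofIsoLimit (Cone.ext (Iso.refl _) fun _ => (Category.id_comp _).symm))

end Limits

instance preservesFiniteLimits_fst [HasFiniteLimits A] [HasFiniteLimits B]
    [PreservesFiniteLimits R] : PreservesFiniteLimits (fst L R) :=
  ⟨fun _ _ _ => inferInstance⟩

instance preservesFiniteLimits_snd [HasFiniteLimits A] [HasFiniteLimits B]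
    [PreservesFiniteLimits R] : PreservesFiniteLimits (snd L R) :=
  ⟨fun _ _ _ => inferInstance⟩

instance preservesFiniteColimits_fst [HasFiniteColimits A] [HasFiniteColimits B]
    [PreservesFiniteColimits L] : PreservesFiniteColimits (fst L R) :=
  ⟨fun _ _ _ => inferInstance⟩

instance preservesFiniteColimits_snd [HasFiniteColimits A] [HasFiniteColimits B]
    [PreservesFiniteColimits L] : PreservesFiniteColimits (snd L R) :=
  ⟨fun _ _ _ => inferInstance⟩

end CategoryTheory.Comma

theorem comma_shortExact_components_general {A B C : Type*} [Category A] [Category B] [Category C]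
    [Abelian A] [Abelian B]
    (F : A ⥤ C) [PreservesFiniteColimits F] (G : B ⥤ C) [PreservesFiniteLimits G]
    [Abelian (Comma F G)]
    [(Comma.fst F G).PreservesZeroMorphisms] [(Comma.snd F G).PreservesZeroMorphisms]
    (S : ShortComplex (Comma F G)) (hS : S.ShortExact) :
    (S.map (Comma.fst F G)).ShortExact ∧ (S.map (Comma.snd F G)).ShortExact :=
  ⟨hS.map_of_exact _, hS.map_of_exact _⟩

/-- With `A`, `B`, `C` abelian, `F : A ⥤ C` right exact, `G : B ⥤ C` left exact and
`Comma F G` abelian (as in the main theorem), every short exact sequence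
`0 → (A',B',α') → (A,B,α) → (A'',B'',α'') → 0` in `Comma F G` induces, by taking
first components, a short exact sequence `0 → A' → A → A'' → 0` in `A`, and, by
taking second components, a short exact sequence `0 → B' → B → B'' → 0` in `B`. -/
theorem comma_shortExact_components {A B C : Type*} [Category A] [Category B] [Category C]
    [Abelian A] [Abelian B] [Abelian C]
    (F : A ⥤ C) [PreservesFiniteColimits F] (G : B ⥤ C) [PreservesFiniteLimits G]
    [Abelian (Comma F G)]
    [(Comma.fst F G).PreservesZeroMorphisms] [(Comma.snd F G).PreservesZeroMorphisms]
    (S : ShortComplex (Comma F G)) (hS : S.ShortExact) :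
    (S.map (Comma.fst F G)).ShortExact ∧ (S.map (Comma.snd F G)).ShortExact :=
  comma_shortExact_components_general F G S hS
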